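/- arXiv:1411.1586 — 7 statements merged into one kernel-verified Lean document; each statement's English description precedes it below -/
import Mathlib

section
/- Let k and s be integers with 2 ≤ k and 2k ≤ s, and assume moreover that k ≥ 3 or s ≥ 7. Then the rational number degI(k,s) := ((s-k)·k)! · sf(s-k-1) · sf(k-1) / sf(s-1) satisfies degI(k,s) ≥ 2·(s-k)·k. (This is the numerical content of the statement S_B(I_{k,s}) = deg(f)+1 for the Grassmannian I_{k,s} = SU(s)/S(U(k)×U(s-k)), whose complex dimension is n = (s-k)k and whose Plücker embedding has degree degI(k,s): the condition of Theorem 1(i) is deg(f) ≥ 2n.) -/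
open Nat Finset

/-- The degree of the Plücker embedding of the Grassmannian of `k`-planes in `ℂ^s`,
as a rational number, where `Nat.superFactorial m = ∏_{j=1}^m j!` is the superfactorial. -/
def degI (k s : ℕ) : ℚ :=
  (((s - k) * k)! * Nat.superFactorial (s - k - 1) * Nat.superFactorial (k - 1) : ℚ) /
    (Nat.superFactorial (s - 1) : ℚ)

private lemma asc_mono (k : ℕ) : ∀ {a b : ℕ}, a ≤ b → a.ascFactorial k ≤ b.ascFactorial k := by
  induction k with
  | zero => intro a b _; simp
  | succ k ih =>
    intro a b h
    rw [Nat.ascFactorial_succ, Nat.ascFactorial_succ]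
    exact Nat.mul_le_mul (by omega) (ih h)

private lemma lemB' (M : ℕ) (hM : 1 ≤ M) :
    ∀ j : ℕ, (M + 1) * (M + 1).ascFactorial (j + 2) ≤ M * (2 * M + 1).ascFactorial (j + 2) := by
  intro j
  induction j with
  | zero =>
    simp only [Nat.ascFactorial_succ, Nat.ascFactorial_zero]
    obtain ⟨c, rfl⟩ : ∃ c, M = c + 1 := ⟨M - 1, by omega⟩
    nlinarith [c.zero_le, sq_nonneg c]
  | succ j ih =>
    have h1 : (M + 1).ascFactorial (j + 3) = (M + 1 + (j + 2)) * (M + 1).ascFactorial (j + 2) :=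
      Nat.ascFactorial_succ
    have h2 : (2 * M + 1).ascFactorial (j + 3)
        = (2 * M + 1 + (j + 2)) * (2 * M + 1).ascFactorial (j + 2) := Nat.ascFactorial_succ
    rw [h1, h2]
    calc (M + 1) * ((M + 1 + (j + 2)) * (M + 1).ascFactorial (j + 2))
        = (M + 1 + (j + 2)) * ((M + 1) * (M + 1).ascFactorial (j + 2)) := by ring
      _ ≤ (2 * M + 1 + (j + 2)) * (M * (2 * M + 1).ascFactorial (j + 2)) :=
          Nat.mul_le_mul (by omega) ih
      _ = M * ((2 * M + 1 + (j + 2)) * (2 * M + 1).ascFactorial (j + 2)) := by ring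

private lemma lemB (M j : ℕ) (hM : 1 ≤ M) :
    (M + 1) * (M + 1).ascFactorial (j + 2) ≤ M * (M * (j + 2) + 1).ascFactorial (j + 2) :=
  (lemB' M hM j).trans (Nat.mul_le_mul_left M (asc_mono _ (by nlinarith)))

private lemma sf_pos : ∀ n, 0 < Nat.superFactorial n
  | 0 => Nat.one_pos
  | n + 1 => Nat.mul_pos (Nat.factorial_pos _) (sf_pos n)

/-- `Qa k m` encodes the key inequality for actual parameters `K = k+1`, `M = m+1`. -/
private def Qa (k m : ℕ) : Prop :=
  2 * ((m + 1) * (k + 1)) * Nat.superFactorial (m + k + 1) ≤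
    ((m + 1) * (k + 1))! * Nat.superFactorial m * Nat.superFactorial k

private lemma Qa_symm {k m : ℕ} (h : Qa k m) : Qa m k := by
  unfold Qa at h ⊢
  calc 2 * ((k + 1) * (m + 1)) * Nat.superFactorial (k + m + 1)
      = 2 * ((m + 1) * (k + 1)) * Nat.superFactorial (m + k + 1) := by
        rw [add_comm k m]; ring
    _ ≤ ((m + 1) * (k + 1))! * Nat.superFactorial m * Nat.superFactorial k := h
    _ = ((k + 1) * (m + 1))! * Nat.superFactorial k * Nat.superFactorial m := by
        rw [mul_comm (m + 1) (k + 1)]; ring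

private lemma stepQ {k m : ℕ} (hk : 1 ≤ k) (h : Qa k m) : Qa k (m + 1) := by
  obtain ⟨j, rfl⟩ : ∃ j, k = j + 1 := ⟨k - 1, by omega⟩
  unfold Qa at h ⊢
  set K := j + 2 with hK
  set M := m + 1 with hM
  -- identities
  have e1 : Nat.superFactorial (m + 1 + (j + 1) + 1) = (M + K)! * Nat.superFactorial (m + (j+1) + 1) := by
    have h5 : m + 1 + (j + 1) + 1 = (m + (j + 1) + 1) + 1 := by omega
    have h6 : m + (j + 1) + 1 + 1 = M + K := by omega
    rw [h5, Nat.superFactorial_succ, h6]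
  have e2 : Nat.superFactorial (m + 1) = M ! * Nat.superFactorial m := by
    rw [Nat.superFactorial_succ]
  have e3 : ((m + 1 + 1) * (j + 1 + 1))! = (M * K)! * (M * K + 1).ascFactorial K := by
    have h4 : (m + 1 + 1) * (j + 1 + 1) = M * K + K := by rw [hM, hK]; ring
    rw [h4, ← Nat.factorial_mul_ascFactorial (M * K) K]
  have e4 : (M + K)! = M ! * (M + 1).ascFactorial K := (Nat.factorial_mul_ascFactorial M K).symm
  rw [e1, e2, e3, e4]
  -- goal: 2*((M+1)*K)*(M!*(M+1).asc K * sf(m+k+1)) ≤ (MK)!*(MK+1).asc K * (M!* sf m) * sf k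
  have key : 2 * ((M + 1) * K) * ((M + 1).ascFactorial K * Nat.superFactorial (m + (j+1) + 1)) ≤
      (M * K + 1).ascFactorial K * (((m+1) * (j+1+1))! * Nat.superFactorial m * Nat.superFactorial (j+1)) := by
    calc 2 * ((M + 1) * K) * ((M + 1).ascFactorial K * Nat.superFactorial (m + (j+1) + 1))
        = ((M + 1) * (M + 1).ascFactorial K) * (2 * K * Nat.superFactorial (m + (j+1) + 1)) := by ring
      _ ≤ (M * (M * K + 1).ascFactorial K) * (2 * K * Nat.superFactorial (m + (j+1) + 1)) :=
          Nat.mul_le_mul_right _ (lemB M j (by omega))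
      _ = (M * K + 1).ascFactorial K * (2 * ((m + 1) * (j + 1 + 1)) * Nat.superFactorial (m + (j+1) + 1)) := by
          rw [hM, hK]; ring
      _ ≤ (M * K + 1).ascFactorial K * (((m+1) * (j+1+1))! * Nat.superFactorial m * Nat.superFactorial (j+1)) :=
          Nat.mul_le_mul_left _ h
  calc 2 * ((m + 1 + 1) * (j + 1 + 1)) * (M ! * (M + 1).ascFactorial K * Nat.superFactorial (m + (j+1) + 1))
      = M ! * (2 * ((M + 1) * K) * ((M + 1).ascFactorial K * Nat.superFactorial (m + (j+1) + 1))) := by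
        rw [hM, hK]; ring
    _ ≤ M ! * ((M * K + 1).ascFactorial K * (((m+1) * (j+1+1))! * Nat.superFactorial m * Nat.superFactorial (j+1))) :=
        Nat.mul_le_mul_left _ key
    _ = (M * K)! * (M * K + 1).ascFactorial K * (M ! * Nat.superFactorial m) * Nat.superFactorial (j+1) := by
        have : (m + 1) * (j + 1 + 1) = M * K := by rw [hM, hK]
        rw [this]; ring

private lemma chainM {k : ℕ} (hk : 1 ≤ k) {m0 : ℕ} (h0 : Qa k m0) :
    ∀ m, m0 ≤ m → Qa k m := by
  intro m hm
  induction m, hm using Nat.le_induction with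
  | base => exact h0
  | succ n _ ih => exact stepQ hk ih

private lemma Qa22 : Qa 2 2 := by
  unfold Qa
  norm_num [Nat.superFactorial, Nat.factorial]

private lemma Qa14 : Qa 1 4 := by
  unfold Qa
  norm_num [Nat.superFactorial, Nat.factorial]

private lemma Qa_main {k m : ℕ} (hk : 1 ≤ k) (hkm : k ≤ m) (h : 2 ≤ k ∨ 4 ≤ m) : Qa k m := by
  rcases Nat.lt_or_ge k 2 with hk2 | hk2
  · -- k = 1, so m ≥ 4
    have hk1 : k = 1 := by omega
    subst hk1
    have hm : 4 ≤ m := by omega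
    exact chainM (by omega) Qa14 m hm
  · -- k ≥ 2, m ≥ k ≥ 2
    have h1 : Qa 2 k := chainM (by omega) Qa22 k hk2
    have h2 : Qa k 2 := Qa_symm h1
    exact chainM hk h2 m (by omega)

theorem stmt_0 (k s : ℕ) (hk : 2 ≤ k) (hs : 2 * k ≤ s)
    (h : 3 ≤ k ∨ 7 ≤ s) :
    (2 * ((s - k) * k) : ℚ) ≤ degI k s := by
  obtain ⟨a, rfl⟩ : ∃ a, k = a + 2 := ⟨k - 2, by omega⟩
  set m := s - (a + 2) with hm
  have hms : s = m + (a + 2) := by omega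
  have hmk : a + 2 ≤ m := by omega
  have hQ : Qa (a + 1) (m - 1) := Qa_main (by omega) (by omega) (by omega)
  obtain ⟨b, hb⟩ : ∃ b, m = b + 1 := ⟨m - 1, by omega⟩
  have hQ' : Qa (a + 1) b := by rwa [show m - 1 = b by omega] at hQ
  unfold Qa at hQ'
  -- translate to the ℚ statement
  rw [degI, hms]
  have hsub1 : m + (a + 2) - (a + 2) = m := by omega
  have hsub2 : m - 1 = b := by omega
  have hsub3 : m + (a + 2) - 1 = b + (a + 1) + 1 := by omega
  rw [hsub1, hsub2, hsub3]
  rw [le_div_iff₀ (by exact_mod_cast sf_pos _)]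
  have hnat : 2 * ((b + 1) * (a + 2)) * Nat.superFactorial (b + (a + 1) + 1) ≤
      (m * (a + 2))! * Nat.superFactorial b * Nat.superFactorial (a + 1) := by
    rw [hb]
    exact hQ'
  have hcast : ((2 * ((b + 1) * (a + 2)) * Nat.superFactorial (b + (a + 1) + 1) : ℕ) : ℚ) ≤
      (((m * (a + 2))! * Nat.superFactorial b * Nat.superFactorial (a + 1) : ℕ) : ℚ) := by
    exact_mod_cast hnat
  refine le_trans (le_of_eq ?_) (le_trans hcast (le_of_eq ?_))
  · push_cast [hb]; ring
  · push_cast; ring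
end

section
/- For all integers k, s with 1 ≤ k ≤ s-1, the rational number degI(k,s) := ((s-k)·k)! · sf(s-k-1) · sf(k-1) / sf(s-1) is a positive integer; equivalently, sf(s-1) divides ((s-k)·k)! · sf(s-k-1) · sf(k-1). (The paper establishes that the degree of any holomorphic isometric immersion of a Hermitian symmetric space of compact type into projective space is a positive integer, and computes this degree for the Grassmannian I_{k,s} to be degI(k,s).) -/
open Nat Finset

lemma mySfPos (m : ℕ) : 0 < Nat.superFactorial m := by
  induction m with
  | zero => exact Nat.one_pos
  | succ n ih => exact Nat.mul_pos (Nat.factorial_pos _) ih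

/-- Sum of `(m+j)/q` over a full block of `q` consecutive values equals `m`. -/
lemma myBlock (q : ℕ) (hq : 0 < q) (m : ℕ) :
    ∑ j ∈ range q, (m + j) / q = m := by
  induction m with
  | zero =>
    refine Finset.sum_eq_zero fun j hj => ?_
    rw [Finset.mem_range] at hj
    exact Nat.div_eq_of_lt (by omega)
  | succ m ih =>
    have h1 : ∑ j ∈ range (q + 1), (m + j) / q
        = (∑ j ∈ range q, (m + j) / q) + (m + q) / q := Finset.sum_range_succ _ q
    have h2 : ∑ j ∈ range (q + 1), (m + j) / q
        = (∑ j ∈ range q, (m + (j + 1)) / q) + (m + 0) / q := Finset.sum_range_succ' _ q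
    simp only [Nat.add_zero] at h2
    have h3 : ∑ j ∈ range q, (m + (j + 1)) / q = ∑ j ∈ range q, (m + 1 + j) / q := by
      refine Finset.sum_congr rfl fun j _ => ?_
      congr 1; omega
    have h4 : (m + q) / q = m / q + 1 := Nat.add_div_right m hq
    omega

/-- The key floor-sum inequality. -/
lemma myKey (q : ℕ) (hq : 0 < q) :
    ∀ M N K : ℕ, N + K ≤ M →
      ∑ j ∈ range K, (N + j) / q ≤ N * K / q + ∑ j ∈ range K, j / q := by
  intro M
  induction M with
  | zero =>
    intro N K h
    have hK0 : K = 0 := by omega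
    subst hK0
    simp
  | succ M ih =>
    intro N K hNK
    by_cases hN : q ≤ N
    · -- reduce N by q
      set N' := N - q with hN'def
      have e1 : ∑ j ∈ range K, (N + j) / q = (∑ j ∈ range K, (N' + j) / q) + K := by
        have hj : ∀ j, (N + j) / q = (N' + j) / q + 1 := fun j => by
          rw [show N + j = N' + j + q by omega, Nat.add_div_right _ hq]
        rw [Finset.sum_congr rfl fun j _ => hj j, Finset.sum_add_distrib, Finset.sum_const,
          Finset.card_range, smul_eq_mul, mul_one]
      have e2 : N * K / q = K + N' * K / q := by
        calc N * K / q = (q * K + N' * K) / q := by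
              congr 1; rw [← add_mul]; congr 1; omega
          _ = K + N' * K / q := Nat.mul_add_div hq K (N' * K)
      have := ih N' K (by omega)
      omega
    · by_cases hK : q ≤ K
      · -- reduce K by q
        set K' := K - q with hK'def
        have e1 : ∑ j ∈ range K, (N + j) / q
            = (∑ j ∈ range K', (N + j) / q) + (N + K') := by
          rw [show K = K' + q by omega, Finset.sum_range_add]
          congr 1
          rw [← myBlock q hq (N + K')]
          refine Finset.sum_congr rfl fun j _ => ?_
          congr 1; omega
        have e2 : ∑ j ∈ range K, j / q = (∑ j ∈ range K', j / q) + K' := by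
          rw [show K = K' + q by omega, Finset.sum_range_add]
          congr 1
          exact myBlock q hq K'
        have e3 : N * K / q = N * K' / q + N := by
          calc N * K / q = (N * K' + N * q) / q := by
                congr 1; rw [← mul_add]; congr 1; omega
            _ = N * K' / q + N := Nat.add_mul_div_right _ _ hq
        have := ih N K' (by omega)
        omega
      · -- base case: N < q, K < q
        push_neg at hN hK
        have hz : ∑ j ∈ range K, j / q = 0 :=
          Finset.sum_eq_zero fun j hj => Nat.div_eq_of_lt (by
            rw [Finset.mem_range] at hj; omega)
        by_cases hqNK : N + K ≤ q
        · have hz2 : ∑ j ∈ range K, (N + j) / q = 0 :=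
            Finset.sum_eq_zero fun j hj => Nat.div_eq_of_lt (by
              rw [Finset.mem_range] at hj; omega)
          rw [hz, hz2]
          exact Nat.zero_le _
        · push_neg at hqNK
          have hcard : q - N ≤ K := by omega
          have split : ∑ j ∈ range K, (N + j) / q
              = ∑ j ∈ Ico 0 (q - N), (N + j) / q + ∑ j ∈ Ico (q - N) K, (N + j) / q := by
            rw [Finset.range_eq_Ico, ← Finset.sum_Ico_consecutive _ (Nat.zero_le _) hcard]
          have hz1 : ∑ j ∈ Ico 0 (q - N), (N + j) / q = 0 :=
            Finset.sum_eq_zero fun j hj => Nat.div_eq_of_lt (by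
              rw [Finset.mem_Ico] at hj; omega)
          have hb1 : ∑ j ∈ Ico (q - N) K, (N + j) / q ≤ N + K - q := by
            calc ∑ j ∈ Ico (q - N) K, (N + j) / q ≤ ∑ _j ∈ Ico (q - N) K, 1 := by
                  refine Finset.sum_le_sum fun j hj => ?_
                  have : (N + j) / q < 2 := (Nat.div_lt_iff_lt_mul hq).2 (by
                    rw [Finset.mem_Ico] at hj; omega)
                  omega
              _ = K - (q - N) := by rw [Finset.sum_const, Nat.card_Ico, smul_eq_mul, mul_one]
              _ ≤ N + K - q := by omega
          have hb2 : N + K - q ≤ N * K / q := by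
            rw [Nat.le_div_iff_mul_le hq]
            set a := q - N with ha
            set b := q - K with hb
            set t := N + K - q with ht
            have h1 : N = t + b := by omega
            have h2 : q = K + b := by omega
            calc t * q = t * K + t * b := by rw [h2]; ring
              _ ≤ t * K + K * b := by
                  have htK : t ≤ K := by omega
                  exact Nat.add_le_add_left (Nat.mul_le_mul_right b htK) _
              _ = N * K := by rw [h1]; ring
          omega

lemma myLegendreSf (p : ℕ) (pp : p.Prime) (m b : ℕ) (hmb : m < b) :
    (Nat.superFactorial m).factorization p
      = ∑ j ∈ range (m + 1), ∑ i ∈ Ico 1 b, j / p ^ i := by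
  haveI : Fact p.Prime := ⟨pp⟩
  rw [← Nat.prod_range_succ_factorial,
    Nat.factorization_prod (fun j _ => (Nat.factorial_pos j).ne')]
  rw [Finsupp.finset_sum_apply]
  refine Finset.sum_congr rfl fun j hj => ?_
  rw [Finset.mem_range] at hj
  rw [Nat.factorization_def _ pp]
  exact padicValNat_factorial (by
    calc Nat.log p j ≤ j := Nat.log_le_self p j
      _ < b := by omega)

lemma mySfDvd (a b : ℕ) :
    Nat.superFactorial (a + b + 1) ∣
      ((a + 1) * (b + 1))! * Nat.superFactorial a * Nat.superFactorial b := by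
  have hL : Nat.superFactorial (a + b + 1) ≠ 0 := (mySfPos _).ne'
  have hR : ((a + 1) * (b + 1))! * Nat.superFactorial a * Nat.superFactorial b ≠ 0 :=
    Nat.mul_ne_zero (Nat.mul_ne_zero (Nat.factorial_pos _).ne' (mySfPos _).ne') (mySfPos _).ne'
  rw [← Nat.factorization_le_iff_dvd hL hR, Finsupp.le_def]
  intro p
  by_cases pp : p.Prime
  · haveI : Fact p.Prime := ⟨pp⟩
    set B := (a + 1) * (b + 1) + 1 with hB
    have hab : a + b + 1 < B := by nlinarith
    have hRfac :
        (((a + 1) * (b + 1))! * Nat.superFactorial a * Nat.superFactorial b).factorization p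
        = (((a + 1) * (b + 1))!).factorization p + (Nat.superFactorial a).factorization p
          + (Nat.superFactorial b).factorization p := by
      rw [Nat.factorization_mul (Nat.mul_ne_zero (Nat.factorial_pos _).ne' (mySfPos _).ne')
          (mySfPos _).ne',
        Nat.factorization_mul (Nat.factorial_pos _).ne' (mySfPos _).ne']
      simp
    rw [hRfac, myLegendreSf p pp _ B hab, myLegendreSf p pp a B (by nlinarith),
      myLegendreSf p pp b B (by nlinarith)]
    have hfac : (((a + 1) * (b + 1))!).factorization p
        = ∑ i ∈ Ico 1 B, (a + 1) * (b + 1) / p ^ i := by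
      rw [Nat.factorization_def _ pp]
      exact padicValNat_factorial (by
        calc Nat.log p ((a + 1) * (b + 1)) ≤ (a + 1) * (b + 1) := Nat.log_le_self _ _
          _ < B := by omega)
    rw [hfac]
    rw [Finset.sum_comm (s := range (a + b + 2)),
      Finset.sum_comm (s := range (a + 1)), Finset.sum_comm (s := range (b + 1))]
    rw [← Finset.sum_add_distrib, ← Finset.sum_add_distrib]
    refine Finset.sum_le_sum fun i hi => ?_
    have hq : 0 < p ^ i := Nat.pow_pos pp.pos
    set q := p ^ i with hqdef
    have hsplit : ∑ j ∈ range (a + b + 2), j / q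
        = ∑ j ∈ range (a + 1), j / q + ∑ j ∈ range (b + 1), (a + 1 + j) / q := by
      rw [show a + b + 2 = (a + 1) + (b + 1) by omega, Finset.sum_range_add]
    rw [hsplit]
    have := myKey q hq ((a + 1) + (b + 1)) (a + 1) (b + 1) le_rfl
    omega
  · simp [Nat.factorization_eq_zero_of_not_prime _ pp]

theorem stmt_1 (k s : ℕ) (hk : 1 ≤ k) (hks : k ≤ s - 1) :
    (∃ d : ℕ, 0 < d ∧ degI k s = (d : ℚ)) ∧
    Nat.superFactorial (s - 1) ∣
      ((s - k) * k)! * Nat.superFactorial (s - k - 1) * Nat.superFactorial (k - 1) := by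
  have hs : k + 1 ≤ s := by omega
  have hdvd : Nat.superFactorial (s - 1) ∣
      ((s - k) * k)! * Nat.superFactorial (s - k - 1) * Nat.superFactorial (k - 1) := by
    have := mySfDvd (s - k - 1) (k - 1)
    rw [show (s - k - 1) + (k - 1) + 1 = s - 1 by omega,
      show (s - k - 1 + 1) * (k - 1 + 1) = (s - k) * k by
        congr 1 <;> omega] at this
    exact this
  refine ⟨?_, hdvd⟩
  obtain ⟨c, hc⟩ := hdvd
  have hcpos : 0 < c := by
    rcases Nat.eq_zero_or_pos c with h0 | h
    · exfalso
      have : ((s - k) * k)! * Nat.superFactorial (s - k - 1) * Nat.superFactorial (k - 1) = 0 := by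
        rw [hc, h0, mul_zero]
      exact (Nat.mul_ne_zero (Nat.mul_ne_zero (Nat.factorial_pos _).ne' (mySfPos _).ne')
        (mySfPos _).ne') this
    · exact h
  refine ⟨c, hcpos, ?_⟩
  unfold degI
  have hne : (Nat.superFactorial (s - 1) : ℚ) ≠ 0 := by
    exact_mod_cast (mySfPos (s - 1)).ne'
  rw [div_eq_iff hne]
  exact_mod_cast hc.trans (Nat.mul_comm _ _)
end

section
/- For every integer s ≥ 6, the rational number degII(s) := ( (s(s-1)/2)! · ∏_{j=1}^{s-2} (2j)! ) / ∏_{j=s-1}^{2s-3} j! satisfies degII(s) ≥ s(s-1). (This is the numerical content of the statement S_B(II_s) = deg(f)+1 for the Hermitian symmetric space II_s = SO(2s)/U(s), whose complex dimension is n_s = s(s-1)/2 and whose degree is degII(s): the condition of Theorem 1(i) is deg(f) ≥ 2n_s, i.e. degII(s)/n_s ≥ 2.) -/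
open Nat Finset

/-- The degree of the coherent states embedding of `II_s = SO(2s)/U(s)`,
as a rational number. -/
def degII (s : ℕ) : ℚ :=
  ((s * (s - 1) / 2)! * ∏ j ∈ Finset.Icc 1 (s - 2), (2 * j)! : ℚ) /
    (∏ j ∈ Finset.Icc (s - 1) (2 * s - 3), j ! : ℚ)

/-- Triangle numbers: `U n = n(n+1)/2`. -/
def U : ℕ → ℕ
  | 0 => 0
  | n + 1 => U n + (n + 1)

lemma two_U (n : ℕ) : 2 * U n = n * (n + 1) := by
  induction n with
  | zero => rfl
  | succ n ih =>
    show 2 * (U n + (n + 1)) = _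
    rw [mul_add, ih]; ring

lemma U_eq (r : ℕ) : (r + 2) * (r + 1) / 2 = U (r + 1) := by
  refine Nat.div_eq_of_eq_mul_left (by norm_num) ?_
  rw [mul_comm (U (r + 1)) 2, two_U]; ring

/-- Numerator of `degII (r+2)`. -/
def Nn (r : ℕ) : ℕ := (U (r + 1))! * ∏ j ∈ Finset.Icc 1 r, (2 * j)!

/-- Denominator of `degII (r+2)`. -/
def Dn (r : ℕ) : ℕ := ∏ j ∈ Finset.Icc (r + 1) (2 * r + 1), j !

lemma fact_add (n m : ℕ) : (n + m)! = n ! * ∏ k ∈ Finset.Icc (n + 1) (n + m), k := by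
  induction m with
  | zero => simp
  | succ m ih =>
    rw [show n + (m + 1) = (n + m) + 1 from rfl, Nat.factorial_succ,
      Finset.prod_Icc_succ_top (by omega), ih]
    ring

lemma Nn_succ (r : ℕ) :
    Nn (r + 1) = Nn r * ((2 * r + 2)! * ∏ k ∈ Finset.Icc (U (r + 1) + 1) (U (r + 1) + (r + 2)), k) := by
  unfold Nn
  rw [show U (r + 1 + 1) = U (r + 1) + (r + 2) from rfl, fact_add,
    Finset.prod_Icc_succ_top (by omega : 1 ≤ r + 1), show 2 * (r + 1) = 2 * r + 2 from by ring]
  ring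

lemma Dn_succ (r : ℕ) :
    Dn (r + 1) * (r + 1)! = Dn r * ((2 * r + 2)! * (2 * r + 3)!) := by
  unfold Dn
  have h1 : ∏ j ∈ Finset.Icc (r + 1) (2 * r + 3), j ! =
      (r + 1)! * ∏ j ∈ Finset.Icc (r + 2) (2 * r + 3), j ! := by
    rw [← Finset.Ico_add_one_right_eq_Icc, Finset.prod_eq_prod_Ico_succ_bot (by omega),
      show r + 1 + 1 = r + 2 from rfl, Finset.Ico_add_one_right_eq_Icc]
  rw [show r + 1 + 1 = r + 2 from rfl, show 2 * (r + 1) + 1 = 2 * r + 3 from by ring,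
    mul_comm (∏ j ∈ Finset.Icc (r + 2) (2 * r + 3), j !), ← h1,
    show (2 : ℕ) * r + 3 = (2 * r + 2) + 1 from rfl,
    Finset.prod_Icc_succ_top (by omega), Finset.prod_Icc_succ_top (by omega)]
  ring

lemma keyP (r : ℕ) (hr : 4 ≤ r) :
    (r + 3) * ∏ j ∈ Finset.Icc (r + 2) (2 * r + 3), j ≤
      (r + 1) * ∏ k ∈ Finset.Icc (U (r + 1) + 1) (U (r + 1) + (r + 2)), k := by
  have hUr : 2 * U r = r * (r + 1) := two_U r
  have hmap : ∏ k ∈ Finset.Icc (U (r + 1) + 1) (U (r + 1) + (r + 2)), k =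
      ∏ j ∈ Finset.Icc (r + 2) (2 * r + 3), (j + U r) := by
    have h1 : Finset.Icc (U (r + 1) + 1) (U (r + 1) + (r + 2)) =
        Finset.Icc (r + 2 + U r) (2 * r + 3 + U r) := by
      have : U (r + 1) = U r + (r + 1) := rfl
      congr 1 <;> omega
    rw [h1, ← Finset.map_add_right_Icc, Finset.prod_map]
    rfl
  rw [hmap]
  have hbot : ∀ f : ℕ → ℕ, ∏ j ∈ Finset.Icc (r + 2) (2 * r + 3), f j =
      f (r + 2) * ∏ j ∈ Finset.Icc (r + 3) (2 * r + 3), f j := by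
    intro f
    rw [← Finset.Ico_add_one_right_eq_Icc, Finset.prod_eq_prod_Ico_succ_bot (by omega),
      show r + 2 + 1 = r + 3 from rfl, Finset.Ico_add_one_right_eq_Icc]
  rw [hbot (fun j => j), hbot (fun j => j + U r)]
  have hQ : ∏ j ∈ Finset.Icc (r + 3) (2 * r + 3), j ≤
      ∏ j ∈ Finset.Icc (r + 3) (2 * r + 3), (j + U r) :=
    Finset.prod_le_prod' fun i _ => Nat.le_add_right _ _
  calc (r + 3) * ((r + 2) * ∏ j ∈ Finset.Icc (r + 3) (2 * r + 3), j)
      = ((r + 3) * (r + 2)) * ∏ j ∈ Finset.Icc (r + 3) (2 * r + 3), j := by ring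
    _ ≤ ((r + 1) * (r + 2 + U r)) * ∏ j ∈ Finset.Icc (r + 3) (2 * r + 3), (j + U r) := by
        refine Nat.mul_le_mul ?_ hQ
        nlinarith [hUr]
    _ = (r + 1) * ((r + 2 + U r) * ∏ j ∈ Finset.Icc (r + 3) (2 * r + 3), (j + U r)) := by ring

lemma main_ineq (r : ℕ) (hr : 4 ≤ r) : (r + 2) * (r + 1) * Dn r ≤ Nn r := by
  induction r, hr using Nat.le_induction with
  | base => decide
  | succ r hr ih =>
    have hpos : 0 < (r + 1)! := Nat.factorial_pos _
    refine Nat.le_of_mul_le_mul_right ?_ hpos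
    have hQ0 : (2 * r + 3)! = (r + 1)! * ∏ j ∈ Finset.Icc (r + 2) (2 * r + 3), j := by
      have := fact_add (r + 1) (r + 2)
      rw [show r + 1 + (r + 2) = 2 * r + 3 from by ring, show r + 1 + 1 = r + 2 from rfl] at this
      exact this
    set Q0 := ∏ j ∈ Finset.Icc (r + 2) (2 * r + 3), j with hQ0def
    set P := ∏ k ∈ Finset.Icc (U (r + 1) + 1) (U (r + 1) + (r + 2)), k with hPdef
    have hkey : (r + 3) * Q0 ≤ (r + 1) * P := keyP r hr
    have h1 : (r + 3) * (r + 2) * Dn r * Q0 ≤ Nn r * P := by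
      calc (r + 3) * (r + 2) * Dn r * Q0 = ((r + 2) * Dn r) * ((r + 3) * Q0) := by ring
        _ ≤ ((r + 2) * Dn r) * ((r + 1) * P) := Nat.mul_le_mul_left _ hkey
        _ = ((r + 2) * (r + 1) * Dn r) * P := by ring
        _ ≤ Nn r * P := Nat.mul_le_mul_right _ ih
    calc (r + 1 + 2) * (r + 1 + 1) * Dn (r + 1) * (r + 1)!
        = (r + 3) * (r + 2) * (Dn (r + 1) * (r + 1)!) := by ring
      _ = (r + 3) * (r + 2) * (Dn r * ((2 * r + 2)! * (2 * r + 3)!)) := by rw [Dn_succ]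
      _ = (r + 3) * (r + 2) * (Dn r * ((2 * r + 2)! * ((r + 1)! * Q0))) := by rw [hQ0]
      _ = ((r + 3) * (r + 2) * Dn r * Q0) * ((2 * r + 2)! * (r + 1)!) := by ring
      _ ≤ (Nn r * P) * ((2 * r + 2)! * (r + 1)!) := Nat.mul_le_mul_right _ h1
      _ = (Nn r * ((2 * r + 2)! * P)) * (r + 1)! := by ring
      _ = Nn (r + 1) * (r + 1)! := by rw [Nn_succ]

theorem stmt_3 (s : ℕ) (hs : 6 ≤ s) :
    (s * (s - 1) : ℚ) ≤ degII s := by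
  obtain ⟨r, rfl, hr⟩ : ∃ r, s = r + 2 ∧ 4 ≤ r := ⟨s - 2, by omega, by omega⟩
  have hnum : degII (r + 2) = (Nn r : ℚ) / (Dn r : ℚ) := by
    unfold degII Nn Dn
    rw [show r + 2 - 1 = r + 1 from rfl, show r + 2 - 2 = r from rfl,
      show 2 * (r + 2) - 3 = 2 * r + 1 from by omega, U_eq]
    push_cast
    ring
  rw [hnum]
  have hD : (0 : ℚ) < (Dn r : ℚ) := by
    have : 0 < Dn r := Finset.prod_pos fun i _ => Nat.factorial_pos i
    exact_mod_cast this
  rw [le_div_iff₀ hD]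
  have := main_ineq r hr
  have hcast : ((r + 2) * (r + 1) * Dn r : ℚ) ≤ (Nn r : ℚ) := by exact_mod_cast this
  calc (↑(r + 2) * (↑(r + 2) - 1) : ℚ) * Dn r = ((r + 2) * (r + 1) * Dn r : ℚ) := by push_cast; ring
    _ ≤ (Nn r : ℚ) := hcast
end

section
/- For every integer s ≥ 6, the ratio degII(s)/n_s is strictly increasing in s: degII(s) / (s(s-1)/2) < degII(s+1) / ((s+1)s/2), where degII(s) := ( (s(s-1)/2)! · ∏_{j=1}^{s-2} (2j)! ) / ∏_{j=s-1}^{2s-3} j! and n_s = s(s-1)/2. -/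
open Nat Finset

theorem coreIneq (m : ℕ) (n : ℕ) (hn : 2 * n = (m + 6) * (m + 5)) :
    (2 * (m + 6) - 1)! * (n + (m + 6)) <
      (∏ k ∈ Ico (n + 1) (n + (m + 6) + 1), k) * n * (m + 5)! := by
  have h4 : 4 * m + 24 ≤ 2 * n := by nlinarith [sq_nonneg m]
  have hns : 2 * m + 11 < n := by omega
  have h1 : (2 * (m + 6) - 1)! = (m + 5)! * ∏ j ∈ Ico (m + 6) (2 * (m + 6)), j := by
    have ha : (m + 5)! = ∏ j ∈ Ico 1 (m + 6), j := by
      rw [show m + 6 = (m + 5) + 1 from rfl, Finset.prod_Ico_id_eq_factorial]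
    have h2 : ∏ j ∈ Ico 1 (2 * (m + 6) - 1 + 1), j = (2 * (m + 6) - 1)! :=
      Finset.prod_Ico_id_eq_factorial _
    rw [show 2 * (m + 6) - 1 + 1 = 2 * (m + 6) by omega] at h2
    rw [← h2, ha, Finset.prod_Ico_consecutive _ (by omega) (by omega)]
  rw [h1]
  have hr1 : ∏ j ∈ Ico (m + 6) (2 * (m + 6)), j = ∏ i ∈ range (m + 6), (m + 6 + i) := by
    rw [Finset.prod_Ico_eq_prod_range, show 2 * (m + 6) - (m + 6) = m + 6 by omega]
  have hr2 : ∏ k ∈ Ico (n + 1) (n + (m + 6) + 1), k = ∏ i ∈ range (m + 6), (n + 1 + i) := by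
    rw [Finset.prod_Ico_eq_prod_range, show n + (m + 6) + 1 - (n + 1) = m + 6 by omega]
  rw [hr1, hr2, Finset.prod_range_succ (f := fun i => m + 6 + i), Finset.prod_range_succ (f := fun i => n + 1 + i)]
  have hP : ∏ i ∈ range (m + 5), (m + 6 + i) ≤ ∏ i ∈ range (m + 5), (n + 1 + i) := by
    apply Finset.prod_le_prod'; intro i _; omega
  have hPpos : 0 < ∏ i ∈ range (m + 5), (m + 6 + i) := by positivity
  calc (m + 5)! * ((∏ i ∈ range (m+5), (m + 6 + i)) * (m + 6 + (m + 5))) * (n + (m + 6))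
      = ((2 * m + 11) * ∏ i ∈ range (m+5), (m + 6 + i)) * ((n + (m + 6)) * (m + 5)!) := by
        ring
    _ < (n * ∏ i ∈ range (m+5), (n + 1 + i)) * ((n + (m + 6)) * (m + 5)!) := by
        have step1 : (2 * m + 11) * ∏ i ∈ range (m+5), (m + 6 + i)
            < n * ∏ i ∈ range (m+5), (n + 1 + i) :=
          lt_of_lt_of_le ((Nat.mul_lt_mul_right hPpos).mpr hns) (Nat.mul_le_mul_left n hP)
        exact Nat.mul_lt_mul_of_lt_of_le step1 (le_refl _) (by positivity)
    _ = (∏ i ∈ range (m+5), (n + 1 + i)) * (n + 1 + (m + 5)) * n * (m + 5)! := by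
        ring

theorem keyNat (m n : ℕ) (hn : 2 * n = (m + 6) * (m + 5)) :
    (n ! * ∏ j ∈ Icc 1 (m + 4), (2 * j)!) * (∏ j ∈ Icc (m + 6) (2 * m + 11), j !) * (n + (m + 6))
      < ((n + (m + 6))! * ∏ j ∈ Icc 1 (m + 5), (2 * j)!) * (∏ j ∈ Icc (m + 5) (2 * m + 9), j !) * n := by
  have core := coreIneq m n hn
  have f1 : (n + (m + 6))! = n ! * ∏ k ∈ Ico (n + 1) (n + (m + 6) + 1), k := by
    have h1 : ∏ j ∈ Ico 1 (n + 1), j = n ! := Finset.prod_Ico_id_eq_factorial n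
    have h2 : ∏ j ∈ Ico 1 (n + (m + 6) + 1), j = (n + (m + 6))! :=
      Finset.prod_Ico_id_eq_factorial _
    rw [← h2, ← h1, Finset.prod_Ico_consecutive _ (by omega) (by omega)]
  have f2 : ∏ j ∈ Icc 1 (m + 5), (2 * j)! = (∏ j ∈ Icc 1 (m + 4), (2 * j)!) * (2 * m + 10)! := by
    rw [show m + 5 = (m + 4) + 1 from rfl, Finset.prod_Icc_succ_top (by omega),
      show 2 * (m + 4 + 1) = 2 * m + 10 by ring]
  have f3 : (m + 5)! * ∏ j ∈ Icc (m + 6) (2 * m + 11), j !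
      = (∏ j ∈ Icc (m + 5) (2 * m + 9), j !) * (2 * m + 10)! * (2 * m + 11)! := by
    have e1 : Icc (m + 6) (2 * m + 11) = Ico (m + 6) (2 * m + 12) := by
      ext x; simp only [Finset.mem_Icc, Finset.mem_Ico]; omega
    have e2 : Icc (m + 5) (2 * m + 9) = Ico (m + 5) (2 * m + 10) := by
      ext x; simp only [Finset.mem_Icc, Finset.mem_Ico]; omega
    have hb : ∏ j ∈ Ico (m + 5) (2 * m + 12), j !
        = (m + 5)! * ∏ j ∈ Ico (m + 6) (2 * m + 12), j ! :=
      Finset.prod_eq_prod_Ico_succ_bot (by omega) _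
    have hc1 : ∏ j ∈ Ico (m + 5) (2 * m + 11 + 1), j !
        = (∏ j ∈ Ico (m + 5) (2 * m + 11), j !) * (2 * m + 11)! :=
      Finset.prod_Ico_succ_top (by omega) _
    have hc2 : ∏ j ∈ Ico (m + 5) (2 * m + 10 + 1), j !
        = (∏ j ∈ Ico (m + 5) (2 * m + 10), j !) * (2 * m + 10)! :=
      Finset.prod_Ico_succ_top (by omega) _
    rw [show 2 * m + 11 + 1 = 2 * m + 12 by omega] at hc1
    rw [show 2 * m + 10 + 1 = 2 * m + 11 by omega] at hc2
    rw [e1, e2, ← hb, hc1, hc2]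
  apply Nat.lt_of_mul_lt_mul_right (a := (m + 5)!)
  have Cpos : 0 < n ! * (∏ j ∈ Icc 1 (m + 4), (2 * j)!)
      * ((∏ j ∈ Icc (m + 5) (2 * m + 9), j !) * (2 * m + 10)!) := by positivity
  calc (n ! * ∏ j ∈ Icc 1 (m + 4), (2 * j)!) * (∏ j ∈ Icc (m + 6) (2 * m + 11), j !)
        * (n + (m + 6)) * (m + 5)!
      = (n ! * ∏ j ∈ Icc 1 (m + 4), (2 * j)!)
          * ((m + 5)! * ∏ j ∈ Icc (m + 6) (2 * m + 11), j !) * (n + (m + 6)) := by ring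
    _ = (n ! * ∏ j ∈ Icc 1 (m + 4), (2 * j)!)
          * ((∏ j ∈ Icc (m + 5) (2 * m + 9), j !) * (2 * m + 10)! * (2 * m + 11)!)
          * (n + (m + 6)) := by rw [f3]
    _ = (n ! * (∏ j ∈ Icc 1 (m + 4), (2 * j)!)
          * ((∏ j ∈ Icc (m + 5) (2 * m + 9), j !) * (2 * m + 10)!))
          * ((2 * m + 11)! * (n + (m + 6))) := by ring
    _ < (n ! * (∏ j ∈ Icc 1 (m + 4), (2 * j)!)
          * ((∏ j ∈ Icc (m + 5) (2 * m + 9), j !) * (2 * m + 10)!))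
          * ((∏ k ∈ Ico (n + 1) (n + (m + 6) + 1), k) * n * (m + 5)!) :=
        (Nat.mul_lt_mul_left Cpos).mpr core
    _ = ((n + (m + 6))! * ∏ j ∈ Icc 1 (m + 5), (2 * j)!)
          * (∏ j ∈ Icc (m + 5) (2 * m + 9), j !) * n * (m + 5)! := by
        rw [f1, f2]; ring

theorem stmt_4 (s : ℕ) (hs : 6 ≤ s) :
    degII s / ((s * (s - 1) : ℚ) / 2) < degII (s + 1) / (((s + 1) * s : ℚ) / 2) := by
  obtain ⟨m, rfl⟩ : ∃ m, s = m + 6 := ⟨s - 6, by omega⟩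
  simp only [degII]
  rw [show m + 6 - 1 = m + 5 by omega, show m + 6 - 2 = m + 4 by omega,
    show 2 * (m + 6) - 3 = 2 * m + 9 by omega, show m + 6 + 1 - 1 = m + 6 by omega,
    show m + 6 + 1 - 2 = m + 5 by omega, show 2 * (m + 6 + 1) - 3 = 2 * m + 11 by omega]
  set a : ℕ := (m + 6) * (m + 5) / 2 with ha
  have h2a : 2 * a = (m + 6) * (m + 5) := by
    apply Nat.mul_div_cancel'
    have := Nat.even_mul_succ_self (m + 5)
    rw [show m + 5 + 1 = m + 6 by omega, mul_comm] at this
    exact this.two_dvd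
  have hb : (m + 6 + 1) * (m + 6) / 2 = a + (m + 6) := by
    have h1 : (m + 7) * (m + 6) = (m + 6) * (m + 5) + 2 * (m + 6) := by ring
    have h2 : 2 * ((m + 7) * (m + 6) / 2) = (m + 7) * (m + 6) := by
      apply Nat.mul_div_cancel'
      have := Nat.even_mul_succ_self (m + 6)
      rw [show m + 6 + 1 = m + 7 by omega, mul_comm] at this
      exact this.two_dvd
    have : (m + 7) * (m + 6) / 2 = a + (m + 6) := by linarith
    rw [show m + 6 + 1 = m + 7 by omega, this]
  rw [hb, ← Nat.cast_prod, ← Nat.cast_prod]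
  have h2b : 2 * (a + (m + 6)) = (m + 7) * (m + 6) := by
    have h1 : (m + 7) * (m + 6) = (m + 6) * (m + 5) + 2 * (m + 6) := by ring
    linarith
  have h2aQ := congrArg (fun x : ℕ => (x : ℚ)) h2a
  have h2bQ := congrArg (fun x : ℕ => (x : ℚ)) h2b
  push_cast at h2aQ h2bQ
  have e1 : ((m + 6 : ℕ) : ℚ) * ((m + 6 : ℕ) - 1) / 2 = ((a : ℕ) : ℚ) := by
    rw [div_eq_iff (two_ne_zero)]; push_cast; linear_combination -h2aQ
  have e2 : (((m + 6 : ℕ) : ℚ) + 1) * ((m + 6 : ℕ) : ℚ) / 2 = ((a + (m + 6) : ℕ) : ℚ) := by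
    rw [div_eq_iff (two_ne_zero)]; push_cast; linear_combination -h2bQ
  have hB1pos : (0 : ℚ) < ↑(∏ j ∈ Icc (m + 5) (2 * m + 9), j !) := by
    exact_mod_cast Finset.prod_pos fun i _ => Nat.factorial_pos i
  have hB2pos : (0 : ℚ) < ↑(∏ j ∈ Icc (m + 6) (2 * m + 11), j !) := by
    exact_mod_cast Finset.prod_pos fun i _ => Nat.factorial_pos i
  have apos : 0 < a := by nlinarith [h2a]
  have haQ : (0 : ℚ) < (a : ℚ) := by exact_mod_cast apos
  have hbQ : (0 : ℚ) < ((a + (m + 6) : ℕ) : ℚ) := by positivity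
  rw [e1, e2, div_div, div_div,
    div_lt_div_iff₀ (mul_pos hB1pos haQ) (mul_pos hB2pos hbQ)]
  have key := keyNat m a h2a
  have key' : (a ! * ∏ j ∈ Icc 1 (m + 4), (2 * j)!)
        * ((∏ j ∈ Icc (m + 6) (2 * m + 11), j !) * (a + (m + 6)))
      < ((a + (m + 6))! * ∏ j ∈ Icc 1 (m + 5), (2 * j)!)
        * ((∏ j ∈ Icc (m + 5) (2 * m + 9), j !) * a) := by
    calc _ = (a ! * ∏ j ∈ Icc 1 (m + 4), (2 * j)!) * (∏ j ∈ Icc (m + 6) (2 * m + 11), j !)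
            * (a + (m + 6)) := by ring
      _ < _ := key
      _ = _ := by ring
  exact_mod_cast key'
end

section
/- For every integer s ≥ 2, the rational number degII(s) := ( (s(s-1)/2)! · ∏_{j=1}^{s-2} (2j)! ) / ∏_{j=s-1}^{2s-3} j! is a positive integer; equivalently, ∏_{j=s-1}^{2s-3} j! divides (s(s-1)/2)! · ∏_{j=1}^{s-2} (2j)!. (The paper establishes that the degree of any holomorphic isometric immersion of a Hermitian symmetric space of compact type into projective space is a positive integer, and computes this degree for II_s = SO(2s)/U(s) to be degII(s).) -/
open Nat Finset

lemma blocksum (t : ℕ) (ht : 0 < t) (a : ℕ) :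
    ∑ j ∈ Finset.Ico a (a + t), j / t = a := by
  induction a with
  | zero =>
    apply Finset.sum_eq_zero
    intro j hj
    rw [Finset.mem_Ico] at hj
    exact Nat.div_eq_of_lt (by omega)
  | succ a ih =>
    have h1 : ∑ j ∈ Finset.Ico a (a + t + 1), j / t
        = (∑ j ∈ Finset.Ico a (a + t), j / t) + (a + t) / t :=
      Finset.sum_Ico_succ_top (by omega) _
    have h2 : ∑ j ∈ Finset.Ico a (a + t + 1), j / t
        = a / t + ∑ j ∈ Finset.Ico (a + 1) (a + t + 1), j / t :=
      Finset.sum_eq_sum_Ico_succ_bot (by omega) _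
    have h3 : (a + t) / t = a / t + 1 := Nat.add_div_right a ht
    have h4 : Finset.Ico (a + 1) (a + 1 + t) = Finset.Ico (a + 1) (a + t + 1) := by
      congr 1; omega
    rw [h4]
    rw [ih, h3] at h1
    rw [h1] at h2
    linarith

lemma double_div (t : ℕ) (ht : 0 < t) (c j : ℕ) (hc : 2 * c ≤ t) :
    j / t + (j + c) / t ≤ 2 * j / t := by
  obtain ⟨q, r, hr, rfl⟩ : ∃ q r, r < t ∧ j = t * q + r :=
    ⟨j / t, j % t, Nat.mod_lt _ ht, (Nat.div_add_mod j t).symm⟩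
  have h1 : (t * q + r) / t = q + r / t := Nat.mul_add_div ht q r
  have h2 : (t * q + r + c) / t = q + (r + c) / t := by
    rw [add_assoc]; exact Nat.mul_add_div ht q (r + c)
  have h3 : 2 * (t * q + r) / t = 2 * q + 2 * r / t := by
    have : 2 * (t * q + r) = t * (2 * q) + 2 * r := by ring
    rw [this]; exact Nat.mul_add_div ht _ _
  have hr0 : r / t = 0 := Nat.div_eq_of_lt hr
  rw [h1, h2, h3, hr0]
  rcases le_or_gt c r with h | h
  · have h5 : (r + c) / t ≤ 2 * r / t := Nat.div_le_div_right (by omega)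
    linarith
  · have h5 : (r + c) / t = 0 := Nat.div_eq_of_lt (by omega)
    rw [h5]
    linarith [Nat.zero_le (2 * r / t)]

lemma key (t : ℕ) (ht : 0 < t) (m : ℕ) :
    ∑ j ∈ Finset.Ico m (2 * m), j / t
      ≤ m * (m + 1) / 2 / t + ∑ j ∈ Finset.range m, 2 * j / t := by
  induction m using Nat.strong_induction_on with
  | _ m ih =>
  rcases lt_or_ge m t with hmt | htm
  · -- base case : m < t
    rcases le_or_gt (2 * m) t with h2 | h2
    · have hL : ∑ j ∈ Finset.Ico m (2 * m), j / t = 0 := by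
        apply Finset.sum_eq_zero
        intro j hj
        rw [Finset.mem_Ico] at hj
        exact Nat.div_eq_of_lt (by omega)
      rw [hL]; exact Nat.zero_le _
    · have hsplit : (∑ j ∈ Finset.Ico m t, j / t) + ∑ j ∈ Finset.Ico t (2 * m), j / t
          = ∑ j ∈ Finset.Ico m (2 * m), j / t :=
        Finset.sum_Ico_consecutive _ (by omega) (by omega)
      have hL1 : ∑ j ∈ Finset.Ico m t, j / t = 0 := by
        apply Finset.sum_eq_zero; intro j hj; rw [Finset.mem_Ico] at hj
        exact Nat.div_eq_of_lt hj.2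
      have hL2 : ∑ j ∈ Finset.Ico t (2 * m), j / t = 2 * m - t := by
        have hone : ∀ j ∈ Finset.Ico t (2 * m), j / t = 1 := by
          intro j hj; rw [Finset.mem_Ico] at hj
          exact Nat.div_eq_of_lt_le (by omega) (by omega)
        rw [Finset.sum_congr rfl hone, Finset.sum_const, Nat.card_Ico, smul_eq_mul, mul_one]
      have hmid : m - (t + 1) / 2 ≤ ∑ j ∈ Finset.range m, 2 * j / t := by
        calc m - (t + 1) / 2 = ∑ _j ∈ Finset.Ico ((t + 1) / 2) m, 1 := by
              rw [Finset.sum_const, Nat.card_Ico, smul_eq_mul, mul_one]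
          _ ≤ ∑ j ∈ Finset.Ico ((t + 1) / 2) m, 2 * j / t :=
              Finset.sum_le_sum (fun j hj => by
                rw [Finset.mem_Ico] at hj
                exact (Nat.one_le_div_iff ht).2 (by omega))
          _ ≤ ∑ j ∈ Finset.range m, 2 * j / t :=
              Finset.sum_le_sum_of_subset (by
                rw [Finset.range_eq_Ico]
                exact Finset.Ico_subset_Ico (Nat.zero_le _) le_rfl)
      have hTb : m - t / 2 ≤ m * (m + 1) / 2 / t := by
        rcases le_or_gt m (t / 2) with h | h
        · rw [Nat.sub_eq_zero_of_le h]; exact Nat.zero_le _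
        · rw [Nat.le_div_iff_mul_le ht]
          obtain ⟨k, hk⟩ := Nat.even_mul_succ_self m
          have hdiv : m * (m + 1) / 2 = k := by rw [hk]; omega
          rw [hdiv]
          obtain ⟨a, ha⟩ : ∃ a, m = t / 2 + a := ⟨m - t / 2, by omega⟩
          have hsub : m - t / 2 = a := by omega
          rw [hsub]
          obtain ⟨b, hb⟩ : ∃ b, t / 2 = a + b := ⟨t / 2 - a, by omega⟩
          have ht2 : t ≤ 2 * a + 2 * b + 1 := by omega
          have h1 : a * t ≤ a * (2 * a + 2 * b + 1) := Nat.mul_le_mul_left a ht2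
          have hk2 : k + k = (a + b + a) * (a + b + a + 1) := by
            rw [← hk, ha, hb]
          nlinarith [h1, hk2]
      obtain ⟨X, hX⟩ : ∃ X, m * (m + 1) / 2 / t = X := ⟨_, rfl⟩
      obtain ⟨Y, hY⟩ : ∃ Y, ∑ j ∈ Finset.range m, 2 * j / t = Y := ⟨_, rfl⟩
      rw [← hsplit, hL1, hL2, hX, hY]
      rw [hX] at hTb; rw [hY] at hmid
      omega
  · -- step case : t ≤ m
    obtain ⟨n, rfl⟩ : ∃ n, m = n + t := ⟨m - t, by omega⟩
    have IH := ih n (by omega)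
    have hs1 : (∑ j ∈ Finset.Ico (n + t) (2 * n + t), j / t)
        + ∑ j ∈ Finset.Ico (2 * n + t) (2 * (n + t)), j / t
        = ∑ j ∈ Finset.Ico (n + t) (2 * (n + t)), j / t :=
      Finset.sum_Ico_consecutive _ (by omega) (by omega)
    have hs2 : ∑ j ∈ Finset.Ico (n + t) (2 * n + t), j / t
        = (∑ j ∈ Finset.Ico n (2 * n), j / t) + n := by
      have hre := Finset.sum_Ico_add' (fun x => x / t) n (2 * n) t
      rw [← hre, Finset.sum_congr rfl (fun x _ => Nat.add_div_right x ht),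
        Finset.sum_add_distrib, Finset.sum_const, Nat.card_Ico, smul_eq_mul, mul_one]
      have h2n : 2 * n - n = n := by omega
      rw [h2n]
    have hs3 : ∑ j ∈ Finset.Ico (2 * n + t) (2 * (n + t)), j / t = 2 * n + t := by
      have heq : Finset.Ico (2 * n + t) (2 * (n + t)) = Finset.Ico (2 * n + t) (2 * n + t + t) := by
        congr 1; omega
      rw [heq]; exact blocksum t ht (2 * n + t)
    have hTs : n * (n + 1) / 2 / t + n + (t + 1) / 2 ≤ (n + t) * (n + t + 1) / 2 / t := by
      obtain ⟨k1, hk1⟩ := Nat.even_mul_succ_self (n + t)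
      obtain ⟨k2, hk2⟩ := Nat.even_mul_succ_self n
      obtain ⟨k3, hk3⟩ := Nat.even_mul_succ_self t
      have hT1 : (n + t) * (n + t + 1) / 2 = k1 := by rw [hk1]; omega
      have hT2 : n * (n + 1) / 2 = k2 := by rw [hk2]; omega
      have hring : (n + t) * (n + t + 1) = n * (n + 1) + 2 * (n * t) + t * (t + 1) := by ring
      have hkk : k1 = k2 + n * t + k3 := by linarith [hk1, hk2, hk3, hring]
      have hq3 : (t + 1) / 2 * t ≤ k3 := by
        have h0 : 2 * ((t + 1) / 2) ≤ t + 1 := by omega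
        have h1 : 2 * ((t + 1) / 2 * t) ≤ (t + 1) * t := by
          calc 2 * ((t + 1) / 2 * t) = 2 * ((t + 1) / 2) * t := by ring
            _ ≤ (t + 1) * t := Nat.mul_le_mul_right t h0
        have h2 : (t + 1) * t = t * (t + 1) := by ring
        linarith [hk3]
      rw [hT1, hT2, Nat.le_div_iff_mul_le ht]
      have hb1 : k2 / t * t ≤ k2 := Nat.div_mul_le_self k2 t
      calc (k2 / t + n + (t + 1) / 2) * t = k2 / t * t + n * t + (t + 1) / 2 * t := by ring
        _ ≤ k2 + n * t + k3 := Nat.add_le_add (Nat.add_le_add hb1 le_rfl) hq3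
        _ = k1 := hkk.symm
    have hm1 : ∑ j ∈ Finset.range (n + t), 2 * j / t
        = (∑ j ∈ Finset.range n, 2 * j / t) + ∑ j ∈ Finset.Ico n (n + t), 2 * j / t := by
      rw [Finset.range_eq_Ico, Finset.range_eq_Ico]
      exact (Finset.sum_Ico_consecutive (fun j => 2 * j / t) (Nat.zero_le n)
        (by omega : n ≤ n + t)).symm
    have hm2 : 2 * n + t / 2 ≤ ∑ j ∈ Finset.Ico n (n + t), 2 * j / t := by
      have e1 : ∑ j ∈ Finset.Ico n (n + t), (j + t / 2) / t = n + t / 2 := by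
        rw [Finset.sum_Ico_add' (fun x => x / t) n (n + t) (t / 2)]
        have heq : Finset.Ico (n + t / 2) (n + t + t / 2)
            = Finset.Ico (n + t / 2) (n + t / 2 + t) := by congr 1; omega
        rw [heq]; exact blocksum t ht (n + t / 2)
      calc 2 * n + t / 2
          = (∑ j ∈ Finset.Ico n (n + t), j / t)
            + ∑ j ∈ Finset.Ico n (n + t), (j + t / 2) / t := by
            rw [e1, blocksum t ht n]; omega
        _ = ∑ j ∈ Finset.Ico n (n + t), (j / t + (j + t / 2) / t) := by
            rw [Finset.sum_add_distrib]
        _ ≤ ∑ j ∈ Finset.Ico n (n + t), 2 * j / t :=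
            Finset.sum_le_sum (fun j _ => double_div t ht (t / 2) j (by omega))
    have hhalf : (t + 1) / 2 + t / 2 = t := by omega
    rw [← hs1, hs2, hs3, hm1]
    linarith [IH, hTs, hm2]

lemma key2 (t : ℕ) (ht : 0 < t) (m : ℕ) :
    ∑ j ∈ Finset.Ico m (2 * m), j / t
      ≤ m * (m + 1) / 2 / t + ∑ j ∈ Finset.Ico 1 m, 2 * j / t := by
  rcases Nat.eq_zero_or_pos m with rfl | hm
  · simp
  · have h := key t ht m
    have hre : ∑ j ∈ Finset.range m, 2 * j / t = ∑ j ∈ Finset.Ico 1 m, 2 * j / t := by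
      rw [Finset.range_eq_Ico, Finset.sum_eq_sum_Ico_succ_bot hm]
      simp
    rwa [hre] at h

theorem stmt_5' (m : ℕ) :
    (∏ j ∈ Finset.Ico m (2 * m), j !) ∣
      (m * (m + 1) / 2)! * ∏ j ∈ Finset.Ico 1 m, (2 * j)! := by
  have hBne : (∏ j ∈ Finset.Ico m (2 * m), j !) ≠ 0 :=
    Finset.prod_ne_zero_iff.2 fun j _ => Nat.factorial_ne_zero j
  have hPne : (∏ j ∈ Finset.Ico 1 m, (2 * j)!) ≠ 0 :=
    Finset.prod_ne_zero_iff.2 fun j _ => Nat.factorial_ne_zero _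
  have hAne : (m * (m + 1) / 2)! * (∏ j ∈ Finset.Ico 1 m, (2 * j)!) ≠ 0 :=
    mul_ne_zero (Nat.factorial_ne_zero _) hPne
  rw [← Nat.factorization_le_iff_dvd hBne hAne, Finsupp.le_def]
  intro p
  by_cases hp : p.Prime
  swap
  · simp [Nat.factorization_eq_zero_of_not_prime _ hp]
  haveI : Fact p.Prime := ⟨hp⟩
  set T := m * (m + 1) / 2 with hTdef
  set b := T + 2 * m + 1 with hbdef
  have hlog : ∀ x : ℕ, x ≤ T + 2 * m → Nat.log p x < b := fun x hx =>
    lt_of_le_of_lt (Nat.log_le_self p x) (by omega)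
  have hBfact : (∏ j ∈ Finset.Ico m (2 * m), j !).factorization p
      = ∑ i ∈ Finset.Ico 1 b, ∑ j ∈ Finset.Ico m (2 * m), j / p ^ i := by
    calc (∏ j ∈ Finset.Ico m (2 * m), j !).factorization p
        = ∑ j ∈ Finset.Ico m (2 * m), (j !).factorization p := by
          rw [Nat.factorization_prod fun j _ => Nat.factorial_ne_zero j]
          exact Finset.sum_apply' p
      _ = ∑ j ∈ Finset.Ico m (2 * m), ∑ i ∈ Finset.Ico 1 b, j / p ^ i :=
          Finset.sum_congr rfl fun j hj => by
            rw [Nat.factorization_def _ hp]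
            exact padicValNat_factorial (hlog j (by rw [Finset.mem_Ico] at hj; omega))
      _ = ∑ i ∈ Finset.Ico 1 b, ∑ j ∈ Finset.Ico m (2 * m), j / p ^ i := Finset.sum_comm
  have hPfact : (∏ j ∈ Finset.Ico 1 m, (2 * j)!).factorization p
      = ∑ i ∈ Finset.Ico 1 b, ∑ j ∈ Finset.Ico 1 m, 2 * j / p ^ i := by
    calc (∏ j ∈ Finset.Ico 1 m, (2 * j)!).factorization p
        = ∑ j ∈ Finset.Ico 1 m, ((2 * j)!).factorization p := by
          rw [Nat.factorization_prod fun j _ => Nat.factorial_ne_zero _]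
          exact Finset.sum_apply' p
      _ = ∑ j ∈ Finset.Ico 1 m, ∑ i ∈ Finset.Ico 1 b, 2 * j / p ^ i :=
          Finset.sum_congr rfl fun j hj => by
            rw [Nat.factorization_def _ hp]
            exact padicValNat_factorial (hlog (2 * j) (by rw [Finset.mem_Ico] at hj; omega))
      _ = ∑ i ∈ Finset.Ico 1 b, ∑ j ∈ Finset.Ico 1 m, 2 * j / p ^ i := Finset.sum_comm
  have hTfact : (T !).factorization p = ∑ i ∈ Finset.Ico 1 b, T / p ^ i := by
    rw [Nat.factorization_def _ hp]
    exact padicValNat_factorial (hlog T (by omega))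
  have hAfact : ((T !) * ∏ j ∈ Finset.Ico 1 m, (2 * j)!).factorization p
      = ∑ i ∈ Finset.Ico 1 b, (T / p ^ i + ∑ j ∈ Finset.Ico 1 m, 2 * j / p ^ i) := by
    rw [Nat.factorization_mul (Nat.factorial_ne_zero T) hPne, Finsupp.add_apply,
      hTfact, hPfact, ← Finset.sum_add_distrib]
  rw [hBfact, hAfact]
  exact Finset.sum_le_sum fun i _ => key2 (p ^ i) (Nat.pow_pos hp.pos) m

theorem stmt_5 (s : ℕ) (hs : 2 ≤ s) :
    (∃ d : ℕ, 0 < d ∧ degII s = (d : ℚ)) ∧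
    (∏ j ∈ Finset.Icc (s - 1) (2 * s - 3), j !) ∣
      (s * (s - 1) / 2)! * ∏ j ∈ Finset.Icc 1 (s - 2), (2 * j)! := by
  obtain ⟨m, rfl⟩ : ∃ m, s = m + 1 := ⟨s - 1, by omega⟩
  have hm : 1 ≤ m := by omega
  have hIcc1 : Finset.Icc (m + 1 - 1) (2 * (m + 1) - 3) = Finset.Ico m (2 * m) := by
    rw [← Finset.Ico_add_one_right_eq_Icc]
    congr 1 <;> omega
  have hIcc2 : Finset.Icc 1 (m + 1 - 2) = Finset.Ico 1 m := by
    rw [← Finset.Ico_add_one_right_eq_Icc]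
    congr 1
    omega
  have hT : (m + 1) * (m + 1 - 1) / 2 = m * (m + 1) / 2 := by
    rw [Nat.add_sub_cancel, Nat.mul_comm]
  have hdvd := stmt_5' m
  have hBne : (∏ j ∈ Finset.Ico m (2 * m), j !) ≠ 0 :=
    Finset.prod_ne_zero_iff.2 fun j _ => Nat.factorial_ne_zero j
  have hAne : (m * (m + 1) / 2)! * (∏ j ∈ Finset.Ico 1 m, (2 * j)!) ≠ 0 :=
    mul_ne_zero (Nat.factorial_ne_zero _)
      (Finset.prod_ne_zero_iff.2 fun j _ => Nat.factorial_ne_zero _)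
  refine ⟨⟨((m * (m + 1) / 2)! * ∏ j ∈ Finset.Ico 1 m, (2 * j)!)
      / (∏ j ∈ Finset.Ico m (2 * m), j !), ?_, ?_⟩, ?_⟩
  · exact Nat.div_pos (Nat.le_of_dvd (Nat.pos_of_ne_zero hAne) hdvd) (Nat.pos_of_ne_zero hBne)
  · unfold degII
    rw [hIcc1, hIcc2, hT, Nat.cast_div hdvd (by exact_mod_cast hBne)]
    push_cast
    ring
  · rw [hIcc1, hIcc2, hT]
    exact hdvd
end

section
/- For every integer s ≥ 5, the rational number degIII(s) := ( (s(s+1)/2)! · ∏_{j=1}^{s-1} (2j)! ) / ∏_{j=s}^{2s-1} j! satisfies degIII(s) ≥ s(s+1). (This is the numerical content of the statement S_B(III_s) = deg(f)+1 for the Hermitian symmetric space III_s = Sp(s)/U(s), whose complex dimension is n_s = s(s+1)/2 and whose degree is degIII(s): the condition of Theorem 1(i) is deg(f) ≥ 2n_s, i.e. degIII(s)/n_s ≥ 2.) -/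
open Nat Finset

/-- The degree of the coherent states embedding of `III_s = Sp(s)/U(s)`,
as a rational number. -/
def degIII (s : ℕ) : ℚ :=
  ((s * (s + 1) / 2)! * ∏ j ∈ Finset.Icc 1 (s - 1), (2 * j)! : ℚ) /
    (∏ j ∈ Finset.Icc s (2 * s - 1), j ! : ℚ)

lemma fact_upper (n k : ℕ) : (n + k)! ≤ n ! * (n + k) ^ k := by
  induction k with
  | zero => simp
  | succ k ih =>
    rw [show n + (k+1) = (n+k)+1 by ring, Nat.factorial_succ]
    calc (n+k+1) * (n+k)! ≤ (n+k+1) * (n ! * (n+k)^k) := by gcongr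
      _ ≤ (n+k+1) * (n ! * (n+k+1)^k) :=
        Nat.mul_le_mul_left _ (Nat.mul_le_mul_left _ (Nat.pow_le_pow_left (by omega) k))
      _ = n ! * (n+k+1)^(k+1) := by ring

lemma fact_lower (n k : ℕ) : n ! * (n + 1) ^ k ≤ (n + k)! := by
  induction k with
  | zero => simp
  | succ k ih =>
    rw [show n + (k+1) = (n+k)+1 by ring, Nat.factorial_succ]
    calc n ! * (n+1)^(k+1) = (n+1) * (n ! * (n+1)^k) := by ring
      _ ≤ (n+1) * (n+k)! := by gcongr
      _ ≤ (n+k+1) * (n+k)! := Nat.mul_le_mul_right _ (by omega)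

lemma key_s6 (s : ℕ) (hs : 5 ≤ s) :
    s * (s+1) * ∏ j ∈ Finset.Icc s (2*s-1), j ! ≤ (s*(s+1)/2)! * ∏ j ∈ Finset.Icc 1 (s-1), (2*j)! := by
  induction s, hs using Nat.le_induction with
  | base => decide
  | succ s hs ih =>
    set m := s*(s+1)/2 with hmdef
    have hm : 2 * m = s * (s+1) := Nat.two_mul_div_two_of_even (even_mul_succ_self s)
    have hring : (s+1)*(s+1+1) = s*(s+1) + 2*(s+1) := by ring
    have hm' : (s+1)*(s+1+1)/2 = m + (s+1) := by
      have h2 : 2 * ((s+1)*(s+1+1)/2) = (s+1)*(s+1+1) :=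
        Nat.two_mul_div_two_of_even (even_mul_succ_self (s+1))
      omega
    rw [hm']
    set P := ∏ j ∈ Finset.Icc 1 (s-1), (2*j)! with hP
    set Q := ∏ j ∈ Finset.Icc (s+1) (2*s-1), j ! with hQ
    have hPnew : ∏ j ∈ Finset.Icc 1 (s+1-1), (2*j)! = P * (2*s)! := by
      rw [show s+1-1 = (s-1)+1 by omega, Finset.prod_Icc_succ_top (by omega),
        show s-1+1 = s by omega]
    have hQnew : ∏ j ∈ Finset.Icc (s+1) (2*(s+1)-1), j ! = Q * (2*s)! * (2*s+1)! := by
      rw [show 2*(s+1)-1 = (2*s)+1 by omega, Finset.prod_Icc_succ_top (by omega),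
        show 2*s = (2*s-1)+1 by omega, Finset.prod_Icc_succ_top (by omega),
        show 2*s-1+1 = 2*s by omega]
    have hDold : ∏ j ∈ Finset.Icc s (2*s-1), j ! = s ! * Q := by
      rw [show (Finset.Icc s (2*s-1)) = Finset.Ico s (2*s) by
            rw [← Finset.Ico_add_one_right_eq_Icc]; congr 1; omega,
        Finset.prod_eq_prod_Ico_succ_bot (by omega),
        show (Finset.Ico (s+1) (2*s)) = Finset.Icc (s+1) (2*s-1) by
            rw [← Finset.Ico_add_one_right_eq_Icc]; congr 1; omega]
    rw [hPnew, hQnew]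
    rw [hDold] at ih
    have A1 : (2*s+1)! ≤ s ! * (2*s+1)^(s+1) := by
      have := fact_upper s (s+1); rw [show s+(s+1) = 2*s+1 by ring] at this; exact this
    have A2 : m ! * (m+1)^(s+1) ≤ (m+(s+1))! := fact_lower m (s+1)
    have hm1 : 2*s+1 ≤ m+1 := by nlinarith [hm]
    have A3 : (s+2) * (2*s+1)^(s+1) ≤ s * (m+1)^(s+1) := by
      have e1 : (s+2) * (2*s+1)^2 ≤ s * (m+1)^2 := by nlinarith [hm, hs]
      calc (s+2) * (2*s+1)^(s+1) = (s+2) * (2*s+1)^2 * (2*s+1)^(s-1) := by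
            rw [mul_assoc, ← pow_add]; congr 2; omega
        _ ≤ s * (m+1)^2 * (2*s+1)^(s-1) := Nat.mul_le_mul_right _ e1
        _ ≤ s * (m+1)^2 * (m+1)^(s-1) :=
            Nat.mul_le_mul_left _ (Nat.pow_le_pow_left hm1 _)
        _ = s * (m+1)^(s+1) := by rw [mul_assoc, ← pow_add]; congr 2; omega
    calc (s+1) * (s+1+1) * (Q * (2*s)! * (2*s+1)!)
        ≤ (s+1) * (s+1+1) * (Q * (2*s)! * (s ! * (2*s+1)^(s+1))) := by gcongr
      _ = (s+1) * ((s+2) * (2*s+1)^(s+1)) * (Q * (2*s)! * s !) := by ring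
      _ ≤ (s+1) * (s * (m+1)^(s+1)) * (Q * (2*s)! * s !) := by gcongr
      _ = ((2*s)! * (m+1)^(s+1)) * (s * (s+1) * (s ! * Q)) := by ring
      _ ≤ ((2*s)! * (m+1)^(s+1)) * (m ! * P) := by gcongr
      _ = (m ! * (m+1)^(s+1)) * (P * (2*s)!) := by ring
      _ ≤ (m+(s+1))! * (P * (2*s)!) := Nat.mul_le_mul_right _ A2
      _ = (m+s+1)! * (P * (2*s)!) := by rw [← add_assoc]

theorem stmt_6 (s : ℕ) (hs : 5 ≤ s) :
    (s * (s + 1) : ℚ) ≤ degIII s := by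
  unfold degIII
  have hden : (0:ℚ) < (∏ j ∈ Finset.Icc s (2 * s - 1), (j ! : ℚ)) :=
    Finset.prod_pos fun j _ => by positivity
  rw [le_div_iff₀ hden]
  calc (s * (s + 1) : ℚ) * ∏ j ∈ Finset.Icc s (2 * s - 1), (j ! : ℚ)
      = ((s * (s+1) * ∏ j ∈ Finset.Icc s (2*s-1), j ! : ℕ) : ℚ) := by push_cast; ring
    _ ≤ (((s*(s+1)/2)! * ∏ j ∈ Finset.Icc 1 (s-1), (2*j)! : ℕ) : ℚ) := Nat.cast_le.mpr (key_s6 s hs)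
    _ = ((s * (s + 1) / 2)! * ∏ j ∈ Finset.Icc 1 (s - 1), (2 * j)! : ℚ) := by push_cast; ring
end

section
/- For every integer s ≥ 1, the rational number degIII(s) := ( (s(s+1)/2)! · ∏_{j=1}^{s-1} (2j)! ) / ∏_{j=s}^{2s-1} j! is a positive integer; equivalently, ∏_{j=s}^{2s-1} j! divides (s(s+1)/2)! · ∏_{j=1}^{s-1} (2j)!. (The paper establishes that the degree of any holomorphic isometric immersion of a Hermitian symmetric space of compact type into projective space is a positive integer, and computes this degree for III_s = Sp(s)/U(s) to be degIII(s).) -/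
open Nat Finset

/-- Sum of `(m+i)/q` over `i < q` equals `m`. -/
lemma sum_div_range (q : ℕ) (hq : 0 < q) (m : ℕ) :
    ∑ i ∈ Finset.range q, (m + i) / q = m := by
  induction m with
  | zero =>
    apply Finset.sum_eq_zero
    intro i hi
    rw [Finset.mem_range] at hi
    exact Nat.div_eq_of_lt (by omega)
  | succ m ih =>
    have h1 : ∑ i ∈ Finset.range (q + 1), (m + i) / q
        = (∑ i ∈ Finset.range q, (m + i) / q) + (m + q) / q :=
      Finset.sum_range_succ _ q
    have h2 : ∑ i ∈ Finset.range (q + 1), (m + i) / q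
        = (∑ i ∈ Finset.range q, (m + (i + 1)) / q) + (m + 0) / q :=
      Finset.sum_range_succ' _ q
    have h3 : ∑ i ∈ Finset.range q, (m + (i + 1)) / q
        = ∑ i ∈ Finset.range q, (m + 1 + i) / q := by
      apply Finset.sum_congr rfl
      intro i _
      congr 1
      omega
    have h4 : (m + q) / q = m / q + 1 := Nat.add_div_right m hq
    simp only [Nat.add_zero] at h2
    rw [h3] at h2
    rw [h4, ih] at h1
    have h6 : (∑ i ∈ Finset.range q, (m + 1 + i) / q) + m / q = (m + 1) + m / q := by
      rw [← h2, h1]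
      ring
    exact Nat.add_right_cancel h6

/-- Sum of `j/q` over `q` consecutive integers starting at `m` equals `m`. -/
lemma sum_div_Ico (q : ℕ) (hq : 0 < q) (m : ℕ) :
    ∑ j ∈ Finset.Ico m (m + q), j / q = m := by
  rw [Finset.sum_Ico_eq_sum_range]
  simpa using sum_div_range q hq m

lemma int_le_sq (x : ℤ) : x ≤ x ^ 2 := by
  rcases le_or_gt x 0 with h | h
  · exact h.trans (sq_nonneg x)
  · nlinarith

/-- `⌊2j/q⌋ = ⌊j/q⌋ + ⌊(j + ⌊q/2⌋)/q⌋`. -/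
lemma two_mul_div (q : ℕ) (hq : 0 < q) (j : ℕ) :
    2 * j / q = j / q + (j + q / 2) / q := by
  obtain ⟨a, r, hr, rfl⟩ : ∃ a r, r < q ∧ j = q * a + r :=
    ⟨j / q, j % q, Nat.mod_lt _ hq, (Nat.div_add_mod j q).symm⟩
  have e0 : 2 * (q * a + r) = q * (2 * a) + 2 * r := by ring
  have e1 : 2 * (q * a + r) / q = 2 * a + 2 * r / q := by
    rw [e0, Nat.mul_add_div hq]
  have e2 : (q * a + r + q / 2) / q = a + (r + q / 2) / q := by
    have : q * a + r + q / 2 = q * a + (r + q / 2) := by ring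
    rw [this, Nat.mul_add_div hq]
  have e3 : q * a / q = a := by
    rw [Nat.mul_div_cancel_left _ hq]
  have e4 : (q * a + r) / q = a + r / q := Nat.mul_add_div hq a r
  have e5 : r / q = 0 := Nat.div_eq_of_lt hr
  have e6 : 2 * r / q = (r + q / 2) / q := by
    rcases le_or_gt q (2 * r) with h | h
    · have l1 : 2 * r / q = 1 := Nat.div_eq_of_lt_le (by omega) (by omega)
      have l2 : (r + q / 2) / q = 1 := Nat.div_eq_of_lt_le (by omega) (by omega)
      rw [l1, l2]
    · have l1 : 2 * r / q = 0 := Nat.div_eq_of_lt (by omega)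
      have l2 : (r + q / 2) / q = 0 := Nat.div_eq_of_lt (by omega)
      rw [l1, l2]
  omega

/-- Key floor inequality. -/
lemma key_ineq (q : ℕ) (hq : 0 < q) (s : ℕ) :
    ∑ j ∈ Finset.Ico s (2 * s), j / q
      ≤ s * (s + 1) / 2 / q + ∑ j ∈ Finset.Ico 1 s, (2 * j) / q := by
  induction s using Nat.strong_induction_on with
  | _ s ih =>
  rcases lt_or_ge s q with hsq | hqs
  · -- base case : s < q
    rcases le_or_gt (2 * s) q with h2 | h2
    · have hL : ∑ j ∈ Finset.Ico s (2 * s), j / q = 0 := by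
        apply Finset.sum_eq_zero
        intro j hj
        rw [Finset.mem_Ico] at hj
        exact Nat.div_eq_of_lt (by omega)
      rw [hL]
      exact Nat.zero_le _
    · have hL : ∑ j ∈ Finset.Ico s (2 * s), j / q = 2 * s - q := by
        rw [← Finset.sum_Ico_consecutive _ (le_of_lt hsq) (by omega : q ≤ 2 * s)]
        have hA : ∑ j ∈ Finset.Ico s q, j / q = 0 := by
          apply Finset.sum_eq_zero
          intro j hj
          rw [Finset.mem_Ico] at hj
          exact Nat.div_eq_of_lt hj.2
        have hB : ∑ j ∈ Finset.Ico q (2 * s), j / q = 2 * s - q := by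
          have : ∀ j ∈ Finset.Ico q (2 * s), j / q = 1 := by
            intro j hj
            rw [Finset.mem_Ico] at hj
            exact Nat.div_eq_of_lt_le (by omega) (by omega)
          rw [Finset.sum_congr rfl this, Finset.sum_const, Nat.card_Ico, smul_eq_mul, mul_one]
        rw [hA, hB, Nat.zero_add]
      rw [hL]
      have hS2 : s - (q - q / 2) ≤ ∑ j ∈ Finset.Ico 1 s, (2 * j) / q := by
        rcases le_or_gt s (q - q / 2) with h | h
        · rw [Nat.sub_eq_zero_of_le h]
          exact Nat.zero_le _
        · calc s - (q - q / 2) = ∑ _j ∈ Finset.Ico (q - q / 2) s, 1 := by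
                rw [Finset.sum_const, Nat.card_Ico, smul_eq_mul, mul_one]
            _ ≤ ∑ j ∈ Finset.Ico (q - q / 2) s, (2 * j) / q := by
                apply Finset.sum_le_sum
                intro j hj
                rw [Finset.mem_Ico] at hj
                exact (Nat.one_le_div_iff hq).mpr (by omega)
            _ ≤ ∑ j ∈ Finset.Ico 1 s, (2 * j) / q := by
                apply Finset.sum_le_sum_of_subset
                apply Finset.Ico_subset_Ico _ le_rfl
                omega
      have hn : s - q / 2 ≤ s * (s + 1) / 2 / q := by
        rw [Nat.le_div_iff_mul_le hq]
        have h2n : 2 * (s * (s + 1) / 2) = s * (s + 1) :=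
          Nat.mul_div_cancel' (even_mul_succ_self s).two_dvd
        rcases le_or_gt s (q / 2) with hle | hlt
        · rw [Nat.sub_eq_zero_of_le hle]
          simp
        · obtain ⟨u, hu⟩ : ∃ u, s = u + q / 2 := ⟨s - q / 2, by omega⟩
          have hsub : s - q / 2 = u := by omega
          rw [hsub]
          have hqt : q ≤ 2 * (q / 2) + 1 := by omega
          have hmain : 2 * (u * q) ≤ s * (s + 1) := by
            have hb : 2 * (u * q) ≤ 2 * (u * (2 * (q / 2) + 1)) := by
              gcongr
            have hc : 2 * (u * (2 * (q / 2) + 1)) ≤ (u + q / 2) * (u + q / 2 + 1) := by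
              have hz : (2 : ℤ) * ((u : ℤ) * (2 * (q / 2 : ℕ) + 1))
                  ≤ ((u : ℤ) + (q / 2 : ℕ)) * ((u : ℤ) + (q / 2 : ℕ) + 1) := by
                rcases le_or_gt (u : ℤ) ((q / 2 : ℕ) : ℤ) with hut | hut
                · nlinarith [sq_nonneg ((u : ℤ) - ((q / 2 : ℕ) : ℤ))]
                · nlinarith [mul_nonneg
                    (by linarith : (0 : ℤ) ≤ (u : ℤ) - ((q / 2 : ℕ) : ℤ))
                    (by linarith : (0 : ℤ) ≤ (u : ℤ) - ((q / 2 : ℕ) : ℤ) - 1)]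
              exact_mod_cast hz
            calc 2 * (u * q) ≤ 2 * (u * (2 * (q / 2) + 1)) := hb
              _ ≤ (u + q / 2) * (u + q / 2 + 1) := hc
              _ = s * (s + 1) := by rw [hu]
          omega
      omega
  · -- inductive step : q ≤ s
    set s' := s - q with hs'def
    have hs'lt : s' < s := by omega
    have IH := ih s' hs'lt
    have hs : s = s' + q := by omega
    -- e1 : sum over Ico s' s of j/q = s'
    have e1 : ∑ j ∈ Finset.Ico s' s, j / q = s' := by
      have : s = s' + q := hs
      rw [this]
      exact sum_div_Ico q hq s'
    -- e2 : splitting identity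
    have e2 : ∑ j ∈ Finset.Ico s' s, j / q + ∑ j ∈ Finset.Ico s (2 * s), j / q
        = ∑ j ∈ Finset.Ico s' (2 * s'), j / q + ∑ j ∈ Finset.Ico (2 * s') (2 * s), j / q := by
      rw [Finset.sum_Ico_consecutive _ (by omega : s' ≤ s) (by omega : s ≤ 2 * s),
        Finset.sum_Ico_consecutive _ (by omega : s' ≤ 2 * s') (by omega : 2 * s' ≤ 2 * s)]
    -- e3 : the 2q consecutive block
    have e3 : ∑ j ∈ Finset.Ico (2 * s') (2 * s), j / q = (2 * s - 2 * q) + (2 * s - q) := by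
      rw [← Finset.sum_Ico_consecutive _ (by omega : 2 * s' ≤ 2 * s' + q) (by omega : 2 * s' + q ≤ 2 * s)]
      have ha : ∑ j ∈ Finset.Ico (2 * s') (2 * s' + q), j / q = 2 * s' := sum_div_Ico q hq (2 * s')
      have hb : ∑ j ∈ Finset.Ico (2 * s' + q) (2 * s), j / q = 2 * s' + q := by
        have : 2 * s = (2 * s' + q) + q := by omega
        rw [this]
        exact sum_div_Ico q hq (2 * s' + q)
      rw [ha, hb]
      omega
    -- e4 : splitting the RHS sum
    have e4 : ∑ j ∈ Finset.Ico 1 s, (2 * j) / q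
        = ∑ j ∈ Finset.Ico 1 s', (2 * j) / q + ∑ j ∈ Finset.Ico s' s, (2 * j) / q := by
      rcases Nat.eq_zero_or_pos s' with h0 | h0
      · rw [h0]
        rw [show Finset.Ico 1 (0 : ℕ) = ∅ from Finset.Ico_eq_empty (by omega),
          Finset.sum_empty, Nat.zero_add]
        rw [show (∑ j ∈ Finset.Ico 0 s, (2 * j) / q)
            = (2 * 0) / q + ∑ j ∈ Finset.Ico (0 + 1) s, (2 * j) / q from
          Finset.sum_eq_sum_Ico_succ_bot (by omega : 0 < s) _]
        norm_num
      · rw [Finset.sum_Ico_consecutive _ (by omega : 1 ≤ s') (by omega : s' ≤ s)]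
    -- e5 : middle block of RHS
    have e5 : ∑ j ∈ Finset.Ico s' s, (2 * j) / q = s' + (s' + q / 2) := by
      have hsplit : ∀ j ∈ Finset.Ico s' s, (2 * j) / q = j / q + (j + q / 2) / q := by
        intro j _
        exact two_mul_div q hq j
      rw [Finset.sum_congr rfl hsplit, Finset.sum_add_distrib, e1]
      have : ∑ j ∈ Finset.Ico s' s, (j + q / 2) / q = s' + q / 2 := by
        rw [Finset.sum_Ico_eq_sum_range]
        have hlen : s - s' = q := by omega
        rw [hlen]
        have : ∀ i ∈ Finset.range q, (s' + i + q / 2) / q = (s' + q / 2 + i) / q := by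
          intro i _
          congr 1
          omega
        rw [Finset.sum_congr rfl this]
        exact sum_div_range q hq (s' + q / 2)
      rw [this]
    -- nle : the n-part
    have nle : s' * (s' + 1) / 2 / q + (s - q / 2) ≤ s * (s + 1) / 2 / q := by
      have hmono : s' * (s' + 1) / 2 + q * (s - q / 2) ≤ s * (s + 1) / 2 := by
        have h2a : 2 * (s' * (s' + 1) / 2) = s' * (s' + 1) :=
          Nat.mul_div_cancel' (even_mul_succ_self s').two_dvd
        have h2b : 2 * (s * (s + 1) / 2) = s * (s + 1) :=
          Nat.mul_div_cancel' (even_mul_succ_self s).two_dvd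
        obtain ⟨u, hu⟩ : ∃ u, s = u + q / 2 := ⟨s - q / 2, by omega⟩
        have hsub : s - q / 2 = u := by omega
        rw [hsub]
        have E1 : s * (s + 1) = s' * (s' + 1) + 2 * (q * s') + q * q + q := by
          rw [hs]; ring
        have E2 : q * s = q * u + q * (q / 2) := by rw [hu]; ring
        have E3 : q * s = q * s' + q * q := by rw [hs]; ring
        have E4 : q * q ≤ q + 2 * (q * (q / 2)) := by
          calc q * q ≤ q * (2 * (q / 2) + 1) := Nat.mul_le_mul le_rfl (by omega)
            _ = q + 2 * (q * (q / 2)) := by ring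
        omega
      calc s' * (s' + 1) / 2 / q + (s - q / 2)
          = (s' * (s' + 1) / 2 + q * (s - q / 2)) / q := by
            rw [Nat.add_mul_div_left _ _ hq]
        _ ≤ s * (s + 1) / 2 / q := Nat.div_le_div_right hmono
    omega

/-- The divisibility statement. -/
lemma key_dvd (s : ℕ) (hs : 1 ≤ s) :
    (∏ j ∈ Finset.Icc s (2 * s - 1), j !) ∣
      (s * (s + 1) / 2)! * ∏ j ∈ Finset.Icc 1 (s - 1), (2 * j)! := by
  have hIcc1 : Finset.Icc 1 (s - 1) = Finset.Ico 1 s := by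
    rw [← Finset.Ico_add_one_right_eq_Icc]
    congr 1
    omega
  have hIcc2 : Finset.Icc s (2 * s - 1) = Finset.Ico s (2 * s) := by
    rw [← Finset.Ico_add_one_right_eq_Icc]
    congr 1
    omega
  rw [hIcc1, hIcc2]
  set n := s * (s + 1) / 2 with hn
  have hD : (∏ j ∈ Finset.Ico s (2 * s), j !) ≠ 0 :=
    Finset.prod_ne_zero_iff.mpr fun j _ => (Nat.factorial_pos j).ne'
  have hN : (n ! * ∏ j ∈ Finset.Ico 1 s, (2 * j)!) ≠ 0 :=
    Nat.mul_ne_zero (Nat.factorial_pos n).ne'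
      (Finset.prod_ne_zero_iff.mpr fun j _ => (Nat.factorial_pos (2 * j)).ne')
  rw [← Nat.factorization_le_iff_dvd hD hN]
  intro p
  by_cases hp : p.Prime
  · haveI : Fact p.Prime := ⟨hp⟩
    set b := 2 * s + n + 1 with hb
    have hfD : (∏ j ∈ Finset.Ico s (2 * s), j !).factorization p
        = ∑ j ∈ Finset.Ico s (2 * s), ∑ i ∈ Finset.Ico 1 b, j / p ^ i := by
      rw [Nat.factorization_prod fun j _ => (Nat.factorial_pos j).ne']
      rw [Finsupp.finset_sum_apply]
      apply Finset.sum_congr rfl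
      intro j hj
      rw [Finset.mem_Ico] at hj
      rw [Nat.factorization_def _ hp]
      exact padicValNat_factorial (by
        calc Nat.log p j ≤ j := Nat.log_le_self p j
          _ < b := by omega)
    have hfN : (n ! * ∏ j ∈ Finset.Ico 1 s, (2 * j)!).factorization p
        = (∑ i ∈ Finset.Ico 1 b, n / p ^ i)
          + ∑ j ∈ Finset.Ico 1 s, ∑ i ∈ Finset.Ico 1 b, (2 * j) / p ^ i := by
      rw [Nat.factorization_mul (Nat.factorial_pos n).ne'
        (Finset.prod_ne_zero_iff.mpr fun j _ => (Nat.factorial_pos (2 * j)).ne')]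
      rw [Finsupp.add_apply]
      congr 1
      · rw [Nat.factorization_def _ hp]
        exact padicValNat_factorial (by
          calc Nat.log p n ≤ n := Nat.log_le_self p n
            _ < b := by omega)
      · rw [Nat.factorization_prod fun j _ => (Nat.factorial_pos (2 * j)).ne']
        rw [Finsupp.finset_sum_apply]
        apply Finset.sum_congr rfl
        intro j hj
        rw [Finset.mem_Ico] at hj
        rw [Nat.factorization_def _ hp]
        exact padicValNat_factorial (by
          calc Nat.log p (2 * j) ≤ 2 * j := Nat.log_le_self p (2 * j)
            _ < b := by omega)
    rw [hfD, hfN, Finset.sum_comm]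
    rw [Finset.sum_comm (s := Finset.Ico 1 s)]
    rw [← Finset.sum_add_distrib]
    apply Finset.sum_le_sum
    intro i _
    exact key_ineq (p ^ i) (Nat.pow_pos hp.pos) s
  · rw [Nat.factorization_eq_zero_of_not_prime _ hp]
    exact Nat.zero_le _

theorem stmt_8 (s : ℕ) (hs : 1 ≤ s) :
    (∃ d : ℕ, 0 < d ∧ degIII s = (d : ℚ)) ∧
    (∏ j ∈ Finset.Icc s (2 * s - 1), j !) ∣
      (s * (s + 1) / 2)! * ∏ j ∈ Finset.Icc 1 (s - 1), (2 * j)! := by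
  have hdvd := key_dvd s hs
  refine ⟨?_, hdvd⟩
  set D := ∏ j ∈ Finset.Icc s (2 * s - 1), j ! with hD
  set N := (s * (s + 1) / 2)! * ∏ j ∈ Finset.Icc 1 (s - 1), (2 * j)! with hN
  have hDpos : 0 < D :=
    Finset.prod_pos fun j _ => Nat.factorial_pos j
  have hNpos : 0 < N :=
    Nat.mul_pos (Nat.factorial_pos _) (Finset.prod_pos fun j _ => Nat.factorial_pos _)
  refine ⟨N / D, Nat.div_pos (Nat.le_of_dvd hNpos hdvd) hDpos, ?_⟩
  have hND : D * (N / D) = N := Nat.mul_div_cancel' hdvd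
  rw [degIII]
  have hcastN : ((s * (s + 1) / 2)! * ∏ j ∈ Finset.Icc 1 (s - 1), (2 * j)! : ℚ) = (N : ℚ) := by
    rw [hN]
    push_cast
    ring
  have hcastD : (∏ j ∈ Finset.Icc s (2 * s - 1), (j ! : ℚ)) = (D : ℚ) := by
    rw [hD]
    push_cast
    ring
  rw [hcastN, hcastD]
  have hDne : (D : ℚ) ≠ 0 := by
    exact_mod_cast hDpos.ne'
  rw [div_eq_iff hDne]
  have hfin : N = N / D * D := (Nat.div_mul_cancel hdvd).symm
  exact_mod_cast hfin
end
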